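/- (No-Free-Hole property in one dimension.) Consider a one-dimensional wireless network with n ≥ 2 distinct stations at positions x₁,…,x_n ∈ ℝ, powers P₁,…,P_n > 0, background noise N ≥ 0, threshold β ≥ 1 and path-loss exponent 2. Let [a,b] ⊆ ℝ be a closed interval containing no station, and suppose both endpoints a and b lie in the reception zone H₁ of station s₁. Then the entire interval [a,b] is contained in H₁. -/

import Mathlib

open Finset

/-- SINR of station `i` at point `t` in a one-dimensional network with
positions `x`, powers `P`, noise `N` and path-loss exponent 2. -/
noncomputable def sinr1 {n : ℕ} (x P : Fin n → ℝ) (N : ℝ) (i : Fin n) (t : ℝ) : ℝ :=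
  (P i / (t - x i) ^ 2) /
    ((∑ j ∈ Finset.univ.erase i, P j / (t - x j) ^ 2) + N)

/-- The reception zone of station `i` in a one-dimensional network. -/
noncomputable def recZone1 {n : ℕ} (x P : Fin n → ℝ) (N β : ℝ) (i : Fin n) : Set ℝ :=
  {t | (∀ j, t ≠ x j) ∧ β ≤ sinr1 x P N i t} ∪ {x i}

/-- Convexity of `y ↦ 1/y²` on each half-line, in inequality form. -/
lemma nfh_key (u v lam : ℝ) (huv : 0 < u * v) (hl : 0 ≤ lam) (hl1 : lam ≤ 1) :
    1/(lam*u + (1-lam)*v)^2 ≤ lam/u^2 + (1-lam)/v^2 := by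
  have hu : u ≠ 0 := left_ne_zero_of_mul huv.ne'
  have hv : v ≠ 0 := right_ne_zero_of_mul huv.ne'
  have hm : 0 ≤ 1 - lam := by linarith
  have hwu : 0 < (lam*u + (1-lam)*v)*u := by
    rcases eq_or_lt_of_le hl with h|h
    · rw [← h]; ring_nf; nlinarith [huv]
    · nlinarith [mul_pos h (by positivity : (0:ℝ) < u^2), mul_nonneg hm huv.le]
  have hw : lam*u + (1-lam)*v ≠ 0 := by
    intro h; rw [h, zero_mul] at hwu; exact lt_irrefl 0 hwu
  rw [div_add_div _ _ (pow_ne_zero 2 hu) (pow_ne_zero 2 hv),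
    div_le_div_iff₀ (by positivity) (by positivity)]
  nlinarith [sq_nonneg (u - v), mul_nonneg (mul_nonneg hl hm) (sq_nonneg (u-v)),
    mul_nonneg (mul_nonneg (mul_nonneg hl hm) (sq_nonneg (u-v))) huv.le,
    sq_nonneg (lam*u - (1-lam)*v), mul_pos huv huv]

/-- Per-interference-term convexity bound after the substitution `y = 1/(t - xᵢ)`. -/
lemma nfh_term (p q r d lam : ℝ) (hp : p ≠ 0) (hq : q ≠ 0) (hr : r ≠ 0)
    (hpq : 0 < p*q) (hPQ : 0 < (p+d)*(q+d))
    (hl : 0 ≤ lam) (hl1 : lam ≤ 1)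
    (hy : 1/r = lam*(1/p) + (1-lam)*(1/q)) :
    r^2/(r+d)^2 ≤ lam*(p^2/(p+d)^2) + (1-lam)*(q^2/(q+d)^2) := by
  have hPd : p + d ≠ 0 := left_ne_zero_of_mul hPQ.ne'
  have hQd : q + d ≠ 0 := right_ne_zero_of_mul hPQ.ne'
  have huv : 0 < ((p+d)/p) * ((q+d)/q) := by
    rw [div_mul_div_comm]; exact div_pos hPQ hpq
  have hw : (r+d)/r = lam*((p+d)/p) + (1-lam)*((q+d)/q) := by
    field_simp at hy ⊢
    linear_combination d * hy
  have hkey := nfh_key ((p+d)/p) ((q+d)/q) lam huv hl hl1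
  rw [← hw] at hkey
  have e1 : (1:ℝ)/((r+d)/r)^2 = r^2/(r+d)^2 := by rw [div_pow, one_div_div]
  have e2 : lam/((p+d)/p)^2 = lam*(p^2/(p+d)^2) := by
    rw [div_pow, div_div_eq_mul_div, mul_div_assoc]
  have e3 : (1-lam)/((q+d)/q)^2 = (1-lam)*(q^2/(q+d)^2) := by
    rw [div_pow, div_div_eq_mul_div, mul_div_assoc]
  rw [e1, e2, e3] at hkey
  exact hkey

/-- Characterization of the SINR condition, with denominators cleared. -/
lemma nfh_char {n : ℕ} (hn : 2 ≤ n) (x P : Fin n → ℝ) (N β : ℝ)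
    (hP : ∀ j, 0 < P j) (hN : 0 ≤ N) (i : Fin n) (t : ℝ) (ht : ∀ j, t ≠ x j) :
    β ≤ sinr1 x P N i t ↔
      β * ((∑ j ∈ Finset.univ.erase i, P j * (t - x i)^2 / (t - x j)^2) + N*(t - x i)^2) ≤ P i := by
  have hsub : ∀ j : Fin n, (0:ℝ) < (t - x j)^2 := fun j => by
    have := sub_ne_zero_of_ne (ht j); positivity
  have hne : (Finset.univ.erase i).Nonempty := by
    obtain ⟨j, hj⟩ := Finset.exists_mem_ne
      (by rw [Finset.card_univ, Fintype.card_fin]; omega) i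
    exact ⟨j, Finset.mem_erase.2 ⟨hj.2, hj.1⟩⟩
  have hD : 0 < (∑ j ∈ Finset.univ.erase i, P j / (t - x j) ^ 2) + N := by
    have : 0 < ∑ j ∈ Finset.univ.erase i, P j / (t - x j) ^ 2 :=
      Finset.sum_pos (fun j _ => div_pos (hP j) (hsub j)) hne
    linarith
  rw [sinr1, le_div_iff₀ hD, le_div_iff₀ (hsub i)]
  have heq : β * ((∑ j ∈ Finset.univ.erase i, P j / (t - x j) ^ 2) + N) * (t - x i)^2
      = β * ((∑ j ∈ Finset.univ.erase i, P j * (t - x i)^2 / (t - x j)^2) + N*(t - x i)^2) := by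
    rw [mul_assoc, add_mul, Finset.sum_mul]
    congr 2
    exact Finset.sum_congr rfl fun j _ => by ring
  rw [heq]

theorem no_free_hole_one_dimension {n : ℕ} (hn : 2 ≤ n)
    (x : Fin n → ℝ) (hx : Function.Injective x)
    (P : Fin n → ℝ) (hP : ∀ j, 0 < P j)
    (N β : ℝ) (hN : 0 ≤ N) (hβ : 1 ≤ β)
    (i : Fin n)
    (a b : ℝ) (hab : a ≤ b) (hfree : ∀ j, x j ∉ Set.Icc a b)
    (ha : a ∈ recZone1 x P N β i) (hb : b ∈ recZone1 x P N β i) :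
    Set.Icc a b ⊆ recZone1 x P N β i := by
  have hne : ∀ s ∈ Set.Icc a b, ∀ j, s ≠ x j := fun s hs j h => hfree j (h ▸ hs)
  have haI : a ∈ Set.Icc a b := ⟨le_refl a, hab⟩
  have hbI : b ∈ Set.Icc a b := ⟨hab, le_refl b⟩
  have hA : β ≤ sinr1 x P N i a := by
    rcases ha with ⟨-, h⟩ | h
    · exact h
    · exact absurd (Set.mem_singleton_iff.1 h) (hne a haI i)
  have hB : β ≤ sinr1 x P N i b := by
    rcases hb with ⟨-, h⟩ | h
    · exact h
    · exact absurd (Set.mem_singleton_iff.1 h) (hne b hbI i)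
  have hA' := (nfh_char hn x P N β hP hN i a (hne a haI)).1 hA
  have hB' := (nfh_char hn x P N β hP hN i b (hne b hbI)).1 hB
  intro t ht
  obtain ⟨hta, htb⟩ := ht
  have htI : t ∈ Set.Icc a b := ⟨hta, htb⟩
  left
  refine ⟨hne t htI, (nfh_char hn x P N β hP hN i t (hne t htI)).2 ?_⟩
  rcases eq_or_lt_of_le hab with heq | hlt
  · have : t = a := le_antisymm (heq ▸ htb) hta
    rw [this]; exact hA'
  -- sign facts: each factor keeps a constant sign on [a, b]
  have hsgn : ∀ j : Fin n, ∀ s ∈ Set.Icc a b, 0 < (a - x j) * (s - x j) := by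
    intro j s hs
    rcases lt_or_ge (x j) a with h | h
    · nlinarith [hs.1, hs.2]
    · have hb' : b < x j := by
        rcases lt_or_ge b (x j) with h' | h'
        · exact h'
        · exact absurd ⟨h, h'⟩ (hfree j)
      nlinarith [hs.1, hs.2]
  have hpq : 0 < (a - x i) * (b - x i) := hsgn i b hbI
  have hpr : 0 < (a - x i) * (t - x i) := hsgn i t htI
  have hp : a - x i ≠ 0 := left_ne_zero_of_mul hpq.ne'
  have hq : b - x i ≠ 0 := right_ne_zero_of_mul hpq.ne'
  have hr : t - x i ≠ 0 := right_ne_zero_of_mul hpr.ne'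
  have hqr : 0 < (b - x i) * (t - x i) := by
    have h2 : (0:ℝ) < (a - x i)^2 := by positivity
    have e : (b - x i) * (t - x i)
        = ((a - x i) * (b - x i)) * ((a - x i) * (t - x i)) / (a - x i)^2 := by
      field_simp
    rw [e]; positivity
  -- the convex-combination coefficient in the variable y = 1/(s - xᵢ)
  have hden : 0 < 1/(a - x i) - 1/(b - x i) := by
    have e : 1/(a - x i) - 1/(b - x i) = (b - a)/((a - x i)*(b - x i)) := by
      rw [div_sub_div _ _ hp hq]
      congr 1
      ring
    rw [e]; exact div_pos (by linarith) hpq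
  have hnum1 : 0 ≤ 1/(t - x i) - 1/(b - x i) := by
    have e : 1/(t - x i) - 1/(b - x i) = (b - t)/((t - x i)*(b - x i)) := by
      rw [div_sub_div _ _ hr hq]
      congr 1
      ring
    rw [e]
    refine div_nonneg (by linarith) ?_
    nlinarith [hqr]
  have hnum2 : 0 ≤ 1/(a - x i) - 1/(t - x i) := by
    have e : 1/(a - x i) - 1/(t - x i) = (t - a)/((a - x i)*(t - x i)) := by
      rw [div_sub_div _ _ hp hr]
      congr 1
      ring
    rw [e]; exact div_nonneg (by linarith) hpr.le
  obtain ⟨lam, hlam⟩ : ∃ l : ℝ, l = (1/(t - x i) - 1/(b - x i))/(1/(a - x i) - 1/(b - x i)) :=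
    ⟨_, rfl⟩
  have hl : 0 ≤ lam := hlam ▸ div_nonneg hnum1 hden.le
  have hl1 : lam ≤ 1 := by
    rw [hlam, div_le_one hden]; linarith
  have hy : 1/(t - x i) = lam*(1/(a - x i)) + (1-lam)*(1/(b - x i)) := by
    have h1 : lam * (1/(a - x i) - 1/(b - x i)) = 1/(t - x i) - 1/(b - x i) := by
      rw [hlam]; exact div_mul_cancel₀ _ hden.ne'
    linear_combination -h1
  -- per-term bounds
  have hterm : ∀ j ∈ Finset.univ.erase i,
      P j * (t - x i)^2 / (t - x j)^2 ≤
        lam * (P j * (a - x i)^2 / (a - x j)^2)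
          + (1-lam) * (P j * (b - x i)^2 / (b - x j)^2) := by
    intro j _
    have hPQ : 0 < ((a - x i) + (x i - x j)) * ((b - x i) + (x i - x j)) := by
      rw [show (a - x i) + (x i - x j) = a - x j by ring,
        show (b - x i) + (x i - x j) = b - x j by ring]
      exact hsgn j b hbI
    have h := nfh_term (a - x i) (b - x i) (t - x i) (x i - x j) lam hp hq hr hpq hPQ hl hl1 hy
    rw [show (t - x i) + (x i - x j) = t - x j by ring,
      show (a - x i) + (x i - x j) = a - x j by ring,
      show (b - x i) + (x i - x j) = b - x j by ring] at h
    calc P j * (t - x i)^2 / (t - x j)^2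
        = P j * ((t - x i)^2 / (t - x j)^2) := mul_div_assoc _ _ _
      _ ≤ P j * (lam*((a - x i)^2/(a - x j)^2) + (1-lam)*((b - x i)^2/(b - x j)^2)) :=
          mul_le_mul_of_nonneg_left h (hP j).le
      _ = lam * (P j * (a - x i)^2 / (a - x j)^2)
          + (1-lam) * (P j * (b - x i)^2 / (b - x j)^2) := by ring
  -- noise term bound
  have hnoise : N*(t - x i)^2 ≤ lam*(N*(a - x i)^2) + (1-lam)*(N*(b - x i)^2) := by
    have huv : 0 < (1/(a - x i)) * (1/(b - x i)) := by
      rw [div_mul_div_comm]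
      exact div_pos (by norm_num) hpq
    have h := nfh_key (1/(a - x i)) (1/(b - x i)) lam huv hl hl1
    rw [← hy] at h
    have e1 : (1:ℝ)/(1/(t - x i))^2 = (t - x i)^2 := by
      rw [div_pow, one_pow, one_div_one_div]
    have e2 : lam/(1/(a - x i))^2 = lam * (a - x i)^2 := by
      rw [div_pow, one_pow, div_div_eq_mul_div, div_one]
    have e3 : (1-lam)/(1/(b - x i))^2 = (1-lam) * (b - x i)^2 := by
      rw [div_pow, one_pow, div_div_eq_mul_div, div_one]
    rw [e1, e2, e3] at h
    nlinarith [mul_le_mul_of_nonneg_left h hN]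
  -- sum everything
  have h1 := Finset.sum_le_sum hterm
  rw [Finset.sum_add_distrib, ← Finset.mul_sum, ← Finset.mul_sum] at h1
  have hsum : (∑ j ∈ Finset.univ.erase i, P j * (t - x i)^2 / (t - x j)^2) + N*(t - x i)^2
      ≤ lam * ((∑ j ∈ Finset.univ.erase i, P j * (a - x i)^2 / (a - x j)^2) + N*(a - x i)^2)
        + (1-lam) * ((∑ j ∈ Finset.univ.erase i, P j * (b - x i)^2 / (b - x j)^2)
            + N*(b - x i)^2) := by
    calc (∑ j ∈ Finset.univ.erase i, P j * (t - x i)^2 / (t - x j)^2) + N*(t - x i)^2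
        ≤ (lam * (∑ j ∈ Finset.univ.erase i, P j * (a - x i)^2 / (a - x j)^2)
            + (1-lam) * (∑ j ∈ Finset.univ.erase i, P j * (b - x i)^2 / (b - x j)^2))
          + (lam*(N*(a - x i)^2) + (1-lam)*(N*(b - x i)^2)) := add_le_add h1 hnoise
      _ = _ := by ring
  have hb0 : (0:ℝ) ≤ β := by linarith
  calc β * ((∑ j ∈ Finset.univ.erase i, P j * (t - x i)^2 / (t - x j)^2) + N*(t - x i)^2)
      ≤ β * (lam * ((∑ j ∈ Finset.univ.erase i, P j * (a - x i)^2 / (a - x j)^2) + N*(a - x i)^2)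
        + (1-lam) * ((∑ j ∈ Finset.univ.erase i, P j * (b - x i)^2 / (b - x j)^2)
            + N*(b - x i)^2)) := mul_le_mul_of_nonneg_left hsum hb0
    _ = lam * (β * ((∑ j ∈ Finset.univ.erase i, P j * (a - x i)^2 / (a - x j)^2) + N*(a - x i)^2))
        + (1-lam) * (β * ((∑ j ∈ Finset.univ.erase i, P j * (b - x i)^2 / (b - x j)^2)
            + N*(b - x i)^2)) := by ring
    _ ≤ lam * P i + (1-lam) * P i :=
        add_le_add (mul_le_mul_of_nonneg_left hA' hl)
          (mul_le_mul_of_nonneg_left hB' (by linarith))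
    _ = P i := by ring
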